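/- Let K be a positive definite m×m real matrix with smallest eigenvalue λ > 0, and let K' be positive definite with ‖K' − K‖_F ≤ ε < λ. Let x₀ minimize (1/2)xᵀKx − cᵀx over the polyhedron {x : Gx ≤ g, Dx = d}, and let x₀' minimize (1/2)xᵀK'x − cᵀx over the same polyhedron. Then ‖x₀' − x₀‖₂ ≤ ε/(λ−ε) · ‖x₀‖₂. -/

import Mathlib

/-!
Each minimizer satisfies the first-order condition of its program on the convex feasible set;
testing the condition for `x₀` at `x₀'` and vice versa and adding gives, for `h = x₀' - x₀`,
`hᵀ K h ≤ ½ (hᵀ (K - K') x₀' + x₀'ᵀ (K - K') h)`. The eigenvalue bound on the left and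
Cauchy–Schwarz with `‖(K - K') v‖ ≤ ‖K - K'‖_F ‖v‖` on the right give
`λ ‖h‖² ≤ ε ‖h‖ (‖x₀‖ + ‖h‖)`, which rearranges to the claim.
-/

open scoped BigOperators
open Matrix

/-- Euclidean norm of a vector. -/
noncomputable def euclNorm {m : ℕ} (v : Fin m → ℝ) : ℝ := Real.sqrt (∑ i, v i ^ 2)

/-- Frobenius norm of a matrix. -/
noncomputable def frobNorm {m : ℕ} (M : Matrix (Fin m) (Fin m) ℝ) : ℝ :=
  Real.sqrt (∑ i, ∑ j, M i j ^ 2)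

open Filter Topology

section Norms

variable {m : ℕ}

lemma euclNorm_nonneg (v : Fin m → ℝ) : 0 ≤ euclNorm v := Real.sqrt_nonneg _

lemma euclNorm_sq (v : Fin m → ℝ) : euclNorm v ^ 2 = ∑ i, v i ^ 2 :=
  Real.sq_sqrt (by positivity)

lemma euclNorm_eq_norm (v : Fin m → ℝ) : euclNorm v = ‖WithLp.toLp 2 v‖ := by
  simp [euclNorm, EuclideanSpace.norm_eq]

lemma euclNorm_add_le (u v : Fin m → ℝ) : euclNorm (u + v) ≤ euclNorm u + euclNorm v := by
  simpa only [euclNorm_eq_norm, WithLp.toLp_add] using norm_add_le _ _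

lemma dotProduct_le_euclNorm_mul (u v : Fin m → ℝ) : u ⬝ᵥ v ≤ euclNorm u * euclNorm v := by
  simpa [dotProduct, euclNorm] using Real.sum_mul_le_sqrt_mul_sqrt Finset.univ u v

lemma euclNorm_mulVec_le (M : Matrix (Fin m) (Fin m) ℝ) (v : Fin m → ℝ) :
    euclNorm (M *ᵥ v) ≤ frobNorm M * euclNorm v := by
  rw [euclNorm, frobNorm, euclNorm, ← Real.sqrt_mul (by positivity), Finset.sum_mul]
  refine Real.sqrt_le_sqrt (Finset.sum_le_sum fun i _ => ?_)
  simpa [mulVec, dotProduct] using Finset.sum_mul_sq_le_sq_mul_sq Finset.univ (M i) v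

lemma dotProduct_mulVec_le_frobNorm (M : Matrix (Fin m) (Fin m) ℝ) (u v : Fin m → ℝ) :
    u ⬝ᵥ M *ᵥ v ≤ frobNorm M * (euclNorm u * euclNorm v) :=
  calc u ⬝ᵥ M *ᵥ v ≤ euclNorm u * euclNorm (M *ᵥ v) := dotProduct_le_euclNorm_mul u _
    _ ≤ euclNorm u * (frobNorm M * euclNorm v) :=
      mul_le_mul_of_nonneg_left (euclNorm_mulVec_le M v) (euclNorm_nonneg u)
    _ = frobNorm M * (euclNorm u * euclNorm v) := by ring

lemma frobNorm_sub_comm (A B : Matrix (Fin m) (Fin m) ℝ) : frobNorm (A - B) = frobNorm (B - A) := by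
  rw [frobNorm, frobNorm, ← neg_sub B A]
  simp only [Matrix.neg_apply, neg_sq]

end Norms

lemma convex_polyhedron {ι κ n : Type*} [Fintype n] (G : Matrix ι n ℝ) (g : ι → ℝ)
    (D : Matrix κ n ℝ) (d : κ → ℝ) :
    Convex ℝ {x | (∀ i, (G *ᵥ x) i ≤ g i) ∧ D *ᵥ x = d} :=
  ((convex_Iic g).linear_preimage G.mulVecLin).inter
    ((convex_singleton d).linear_preimage D.mulVecLin)

lemma nonneg_of_forall_mul_add_sq_mul_nonneg {a b : ℝ}
    (h : ∀ t : ℝ, 0 < t → t ≤ 1 → 0 ≤ t * a + t ^ 2 * b) : 0 ≤ a := by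
  have hlim : Tendsto (fun t => a + t * b) (𝓝[>] 0) (𝓝 a) := by
    have : Continuous (fun t : ℝ => a + t * b) := by fun_prop
    simpa using (this.tendsto 0).mono_left nhdsWithin_le_nhds
  refine ge_of_tendsto hlim ?_
  filter_upwards [Ioc_mem_nhdsGT one_pos] with t ⟨ht0, ht1⟩
  have : 0 ≤ t * (a + t * b) := by linear_combination h t ht0 ht1
  exact nonneg_of_mul_nonneg_right this ht0

noncomputable def quadObjective {n : Type*} [Fintype n] (A : Matrix n n ℝ) (c x : n → ℝ) : ℝ :=
  1 / 2 * (x ⬝ᵥ A *ᵥ x) - c ⬝ᵥ x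

section QuadObjective

variable {n : Type*} [Fintype n] {A : Matrix n n ℝ} {c : n → ℝ}

lemma quadObjective_add_smul (A : Matrix n n ℝ) (c x h : n → ℝ) (t : ℝ) :
    quadObjective A c (x + t • h) = quadObjective A c x +
      t * ((h ⬝ᵥ A *ᵥ x + x ⬝ᵥ A *ᵥ h) / 2 - c ⬝ᵥ h) + t ^ 2 * (h ⬝ᵥ A *ᵥ h / 2) := by
  simp only [quadObjective, mulVec_add, mulVec_smul, dotProduct_add, add_dotProduct,
    dotProduct_smul, smul_dotProduct, smul_eq_mul]
  ring

lemma IsMinOn.quadObjective_deriv_nonneg {S : Set (n → ℝ)} (hS : Convex ℝ S) {x y : n → ℝ}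
    (hmin : IsMinOn (quadObjective A c) S x) (hx : x ∈ S) (hy : y ∈ S) :
    0 ≤ ((y - x) ⬝ᵥ A *ᵥ x + x ⬝ᵥ A *ᵥ (y - x)) / 2 - c ⬝ᵥ (y - x) := by
  refine nonneg_of_forall_mul_add_sq_mul_nonneg (b := (y - x) ⬝ᵥ A *ᵥ (y - x) / 2)
    fun t ht0 ht1 => ?_
  have := isMinOn_iff.mp hmin _ (hS.add_smul_sub_mem hx hy ⟨ht0.le, ht1⟩)
  rw [quadObjective_add_smul] at this
  linarith

lemma quadForm_sub_le_of_isMinOn {S : Set (n → ℝ)} (hS : Convex ℝ S) {A' : Matrix n n ℝ}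
    {x x' : n → ℝ} (hx : x ∈ S) (hx' : x' ∈ S) (hmin : IsMinOn (quadObjective A c) S x)
    (hmin' : IsMinOn (quadObjective A' c) S x') :
    (x' - x) ⬝ᵥ A *ᵥ (x' - x) ≤
      ((x' - x) ⬝ᵥ (A - A') *ᵥ x' + x' ⬝ᵥ (A - A') *ᵥ (x' - x)) / 2 := by
  have h := hmin.quadObjective_deriv_nonneg hS hx hx'
  have h' := hmin'.quadObjective_deriv_nonneg hS hx' hx
  simp only [mulVec_sub, sub_mulVec, dotProduct_sub, sub_dotProduct] at h h' ⊢
  linarith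

end QuadObjective

theorem euclNorm_sub_le_of_isMinOn_quadObjective {m : ℕ} {S : Set (Fin m → ℝ)} (hS : Convex ℝ S)
    {K K' : Matrix (Fin m) (Fin m) ℝ} {lam ε : ℝ}
    (hEig : ∀ v : Fin m → ℝ, lam * ∑ i, v i ^ 2 ≤ v ⬝ᵥ K *ᵥ v)
    (hF : frobNorm (K' - K) ≤ ε) (hεlam : ε < lam) {c x x' : Fin m → ℝ} (hx : x ∈ S)
    (hx' : x' ∈ S) (hmin : IsMinOn (quadObjective K c) S x)
    (hmin' : IsMinOn (quadObjective K' c) S x') :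
    euclNorm (x' - x) ≤ ε / (lam - ε) * euclNorm x := by
  set h := x' - x
  have hε : 0 ≤ ε := (Real.sqrt_nonneg _).trans hF
  have hx'_le : euclNorm x' ≤ euclNorm x + euclNorm h := by
    simpa [h] using euclNorm_add_le x h
  have hbound : lam * euclNorm h ^ 2 ≤ ε * euclNorm h * (euclNorm x + euclNorm h) :=
    calc lam * euclNorm h ^ 2 ≤ h ⬝ᵥ K *ᵥ h := euclNorm_sq h ▸ hEig h
      _ ≤ (h ⬝ᵥ (K - K') *ᵥ x' + x' ⬝ᵥ (K - K') *ᵥ h) / 2 :=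
        quadForm_sub_le_of_isMinOn hS hx hx' hmin hmin'
      _ ≤ frobNorm (K - K') * (euclNorm h * euclNorm x') := by
        linarith [dotProduct_mulVec_le_frobNorm (K - K') h x',
          mul_comm (euclNorm h) (euclNorm x') ▸ dotProduct_mulVec_le_frobNorm (K - K') x' h]
      _ ≤ ε * euclNorm h * (euclNorm x + euclNorm h) := by
        rw [frobNorm_sub_comm, mul_assoc ε]
        exact mul_le_mul hF (mul_le_mul_of_nonneg_left hx'_le (euclNorm_nonneg h))
          (mul_nonneg (euclNorm_nonneg h) (euclNorm_nonneg x')) hε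
  rcases (euclNorm_nonneg h).eq_or_lt with h0 | hpos
  · rw [← h0]
    exact mul_nonneg (div_nonneg hε (by linarith)) (euclNorm_nonneg x)
  · rw [div_mul_eq_mul_div, le_div_iff₀ (by linarith)]
    nlinarith

theorem quadratic_program_perturbation_general {m k l : ℕ}
    (K K' : Matrix (Fin m) (Fin m) ℝ)
    (lam ε : ℝ)
    (hEig : ∀ v : Fin m → ℝ, lam * (∑ i, v i ^ 2) ≤ v ⬝ᵥ K.mulVec v)
    (hF : frobNorm (K' - K) ≤ ε) (hεlam : ε < lam)
    (c : Fin m → ℝ) (G : Matrix (Fin k) (Fin m) ℝ) (g : Fin k → ℝ)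
    (D : Matrix (Fin l) (Fin m) ℝ) (d : Fin l → ℝ)
    (feasible : (Fin m → ℝ) → Prop)
    (hfeas : ∀ x, feasible x ↔ (∀ i, G.mulVec x i ≤ g i) ∧ D.mulVec x = d)
    (x₀ x₀' : Fin m → ℝ)
    (hx₀ : feasible x₀)
    (hx₀min : ∀ x, feasible x →
      (1 / 2) * (x₀ ⬝ᵥ K.mulVec x₀) - c ⬝ᵥ x₀ ≤ (1 / 2) * (x ⬝ᵥ K.mulVec x) - c ⬝ᵥ x)
    (hx₀' : feasible x₀')
    (hx₀'min : ∀ x, feasible x →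
      (1 / 2) * (x₀' ⬝ᵥ K'.mulVec x₀') - c ⬝ᵥ x₀' ≤ (1 / 2) * (x ⬝ᵥ K'.mulVec x) - c ⬝ᵥ x) :
    euclNorm (x₀' - x₀) ≤ ε / (lam - ε) * euclNorm x₀ := by
  have hS : Convex ℝ {x | feasible x} := by
    simpa only [hfeas] using convex_polyhedron G g D d
  exact euclNorm_sub_le_of_isMinOn_quadObjective hS hEig hF hεlam hx₀ hx₀'
    (isMinOn_iff.2 hx₀min) (isMinOn_iff.2 hx₀'min)

/-- Perturbation bound for positive definite quadratic programs (Daniel 1973):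
if `K'` is an `ε`-Frobenius perturbation of `K` (whose smallest eigenvalue is `≥ lam`),
and `x₀`, `x₀'` minimize the respective quadratic objectives over a common polyhedron
`{x : Gx ≤ g, Dx = d}`, then `‖x₀' − x₀‖₂ ≤ ε/(lam−ε)·‖x₀‖₂`. -/
theorem quadratic_program_perturbation {m k l : ℕ}
    (K K' : Matrix (Fin m) (Fin m) ℝ) (hK : K.PosDef) (hK' : K'.PosDef)
    (lam ε : ℝ) (hlam : 0 < lam)
    (hEig : ∀ v : Fin m → ℝ, lam * (∑ i, v i ^ 2) ≤ v ⬝ᵥ K.mulVec v)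
    (hF : frobNorm (K' - K) ≤ ε) (hεlam : ε < lam)
    (c : Fin m → ℝ) (G : Matrix (Fin k) (Fin m) ℝ) (g : Fin k → ℝ)
    (D : Matrix (Fin l) (Fin m) ℝ) (d : Fin l → ℝ)
    (feasible : (Fin m → ℝ) → Prop)
    (hfeas : ∀ x, feasible x ↔ (∀ i, G.mulVec x i ≤ g i) ∧ D.mulVec x = d)
    (x₀ x₀' : Fin m → ℝ)
    (hx₀ : feasible x₀)
    (hx₀min : ∀ x, feasible x →
      (1 / 2) * (x₀ ⬝ᵥ K.mulVec x₀) - c ⬝ᵥ x₀ ≤ (1 / 2) * (x ⬝ᵥ K.mulVec x) - c ⬝ᵥ x)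
    (hx₀' : feasible x₀')
    (hx₀'min : ∀ x, feasible x →
      (1 / 2) * (x₀' ⬝ᵥ K'.mulVec x₀') - c ⬝ᵥ x₀' ≤ (1 / 2) * (x ⬝ᵥ K'.mulVec x) - c ⬝ᵥ x) :
    euclNorm (x₀' - x₀) ≤ ε / (lam - ε) * euclNorm x₀ :=
  quadratic_program_perturbation_general K K' lam ε hEig hF hεlam c G g D d feasible hfeas x₀ x₀'
    hx₀ hx₀min hx₀' hx₀'min
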